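/- For each internal action ι, the equation τ_ι(ι^ω) = D is derivable from the axioms of BTA+REC+AIP+ABSTR. -/
import Mathlib


/-- Terms over a set `V` of variables for the right-hand sides of guarded
recursive specifications over BTA: built from D, S, postconditional
composition and variables. -/
inductive SpecTerm (A V : Type) : Type where
  | dead : SpecTerm A V
  | term : SpecTerm A V
  | var : V → SpecTerm A V
  | pcc : SpecTerm A V → A → SpecTerm A V → SpecTerm A V

/-- A recursive specification `E = {X = t_X | X ∈ V}` is guarded if each
right-hand side is of the form D, S, or `t ⊴ a ⊵ t'`. -/
def Guarded {A V : Type} (E : V → SpecTerm A V) : Prop :=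
  ∀ X, E X = .dead ∨ E X = .term ∨ ∃ t a t', E X = .pcc t a t'

/-- Closed terms of BTA+REC+AIP+ABSTR over a set `A` of actions: inaction D,
termination S, postconditional composition, constants `⟨X|E⟩` for guarded
recursive specifications `E` and variables `X` of `E`, projection operators
`π_n`, and abstraction operators `τ_ι`. -/
inductive TTerm (A : Type) : Type 1 where
  | dead : TTerm A
  | term : TTerm A
  | pcc : TTerm A → A → TTerm A → TTerm A
  | recE {V : Type} (E : V → SpecTerm A V) (hE : Guarded E) (X : V) : TTerm A
  | proj (n : ℕ) (x : TTerm A) : TTerm A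
  | abs (ι : A) (x : TTerm A) : TTerm A

/-- Substitution of closed terms for the variables of a specification term. -/
def SpecTerm.subst {A V : Type} (ρ : V → TTerm A) : SpecTerm A V → TTerm A
  | .dead => .dead
  | .term => .term
  | .var X => ρ X
  | .pcc t a t' => .pcc (t.subst ρ) a (t'.subst ρ)

/-- Derivability of equations between closed terms in BTA+REC+AIP+ABSTR,
where `Ai` is the set of internal actions: the equational consequence
relation (reflexivity, symmetry, transitivity, congruence) generated by the
axioms T1, RDP, P0–P3, TT1–TT4, the conditional axiom (rule) RSP and the
infinitary rules AIP and TT5. -/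
inductive Deriv {A : Type} (Ai : Set A) : TTerm A → TTerm A → Prop where
  | refl (x : TTerm A) : Deriv Ai x x
  | symm {x y : TTerm A} : Deriv Ai x y → Deriv Ai y x
  | trans {x y z : TTerm A} : Deriv Ai x y → Deriv Ai y z → Deriv Ai x z
  | pcc_congr {x x' y y' : TTerm A} (a : A) :
      Deriv Ai x x' → Deriv Ai y y' → Deriv Ai (.pcc x a y) (.pcc x' a y')
  | proj_congr {x y : TTerm A} (n : ℕ) :
      Deriv Ai x y → Deriv Ai (.proj n x) (.proj n y)
  | abs_congr {x y : TTerm A} (ι : A) :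
      Deriv Ai x y → Deriv Ai (.abs ι x) (.abs ι y)
  -- T1
  | t1 {ι : A} (hι : ι ∈ Ai) (x y : TTerm A) :
      Deriv Ai (.pcc x ι y) (.pcc x ι x)
  -- RDP
  | rdp {V : Type} (E : V → SpecTerm A V) (hE : Guarded E) (X : V) :
      Deriv Ai (.recE E hE X) ((E X).subst (fun Y => .recE E hE Y))
  -- RSP
  | rsp {V : Type} (E : V → SpecTerm A V) (hE : Guarded E) (ρ : V → TTerm A)
      (h : ∀ Y, Deriv Ai (ρ Y) ((E Y).subst ρ)) (X : V) :
      Deriv Ai (ρ X) (.recE E hE X)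
  -- P0–P3
  | p0 (x : TTerm A) : Deriv Ai (.proj 0 x) .dead
  | p1 (n : ℕ) : Deriv Ai (.proj (n + 1) .term) .term
  | p2 (n : ℕ) : Deriv Ai (.proj (n + 1) .dead) .dead
  | p3 (n : ℕ) (x : TTerm A) (a : A) (y : TTerm A) :
      Deriv Ai (.proj (n + 1) (.pcc x a y)) (.pcc (.proj n x) a (.proj n y))
  -- AIP
  | aip {x y : TTerm A} (h : ∀ n, Deriv Ai (.proj n x) (.proj n y)) :
      Deriv Ai x y
  -- TT1–TT4
  | tt1 (ι : A) : Deriv Ai (.abs ι .term) .term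
  | tt2 (ι : A) : Deriv Ai (.abs ι .dead) .dead
  | tt3 (ι : A) (x : TTerm A) : Deriv Ai (.abs ι (.pcc x ι x)) (.abs ι x)
  | tt4 {a ι : A} (h : a ≠ ι) (x y : TTerm A) :
      Deriv Ai (.abs ι (.pcc x a y)) (.pcc (.abs ι x) a (.abs ι y))
  -- TT5
  | tt5 {ι : A} {x y : TTerm A}
      (h : ∀ n, Deriv Ai (.abs ι (.proj n x)) (.abs ι (.proj n y))) :
      Deriv Ai (.abs ι x) (.abs ι y)

/-- The guarded recursive specification `{X = ι ∘ X}` (one variable), whose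
`X`-component is `ι^ω`; note `ι ∘ X` abbreviates `X ⊴ ι ⊵ X`. -/
def iotaOmegaSpec {A : Type} (ι : A) : Unit → SpecTerm A Unit :=
  fun _ => .pcc (.var ()) ι (.var ())

theorem iotaOmegaSpec_guarded {A : Type} (ι : A) : Guarded (iotaOmegaSpec ι) :=
  fun _ => Or.inr (Or.inr ⟨_, _, _, rfl⟩)

/-- For each internal action `ι`, the equation `τ_ι(ι^ω) = D` is
derivable from the axioms of BTA+REC+AIP+ABSTR.  (Here the actions form the
set `A = A_b ∪ A_i`, with `tau ∈ A_i`; `ι^ω` abbreviates `⟨X | {X = ι ∘ X}⟩`.) -/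
theorem abs_iota_omega_eq_dead
    (A : Type) (Ai : Set A) (tau : A) (htau : tau ∈ Ai)
    (ι : A) (hι : ι ∈ Ai) :
    Deriv Ai (.abs ι (.recE (iotaOmegaSpec ι) (iotaOmegaSpec_guarded ι) ()))
      TTerm.dead := by
  set W : TTerm A := .recE (iotaOmegaSpec ι) (iotaOmegaSpec_guarded ι) () with hW
  -- W = pcc W ι W by RDP
  have hrdp : Deriv Ai W (.pcc W ι W) := Deriv.rdp _ _ ()
  -- abs ι (proj n W) = D for all n
  have key : ∀ n, Deriv Ai (.abs ι (.proj n W)) TTerm.dead := by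
    intro n
    induction n with
    | zero =>
      exact Deriv.trans (Deriv.abs_congr ι (Deriv.p0 W)) (Deriv.tt2 ι)
    | succ n ih =>
      have h1 : Deriv Ai (.proj (n+1) W) (.pcc (.proj n W) ι (.proj n W)) :=
        Deriv.trans (Deriv.proj_congr (n+1) hrdp) (Deriv.p3 n W ι W)
      exact Deriv.trans (Deriv.abs_congr ι h1)
        (Deriv.trans (Deriv.tt3 ι (.proj n W)) ih)
  have hd : ∀ n, Deriv Ai (.abs ι (.proj n (TTerm.dead : TTerm A))) TTerm.dead := by
    intro n
    cases n with
    | zero => exact Deriv.trans (Deriv.abs_congr ι (Deriv.p0 _)) (Deriv.tt2 ι)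
    | succ n => exact Deriv.trans (Deriv.abs_congr ι (Deriv.p2 n)) (Deriv.tt2 ι)
  have h5 : Deriv Ai (.abs ι W) (.abs ι TTerm.dead) :=
    Deriv.tt5 (fun n => Deriv.trans (key n) (Deriv.symm (hd n)))
  exact Deriv.trans h5 (Deriv.tt2 ι)
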